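/- arXiv:1905.10870 — 2 statements merged into one kernel-verified Lean document; each statement's English description precedes it below -/
import Mathlib

section
/- Let S, A be finite sets with a joint pmf q on S × A whose S-marginal is p, and let f : S → A → (0,1) be an ML predictor. Among all decision rules h : A → (0,1) depending only on a (i.e., EO-fair rules), the rule h*(a) = Σ_s f(s,a) p(s) minimizes the expected Bernoulli KL divergence E_{(S,A)∼q}[ KL(Bern(f(S,A)) ‖ Bern(h(A))) ], provided that S and A are independent under q (i.e., q(s,a) = p(s)·m(a) for the A-marginal m). -/
open Finset

/-- KL divergence between Bernoulli distributions with parameters `x` and `y`. -/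
noncomputable def klBern (x y : ℝ) : ℝ :=
  x * Real.log (x / y) + (1 - x) * Real.log ((1 - x) / (1 - y))

/-!
Write `g a = ∑ s, f s a * p s`. For fixed `y, z`, the map `x ↦ klBern x y - klBern x z` is affine,
so averaging it over `s` with the weights `p s` amounts to evaluating it at the mean `g a`. This gives
the compensation identity
`∑ s, p s * klBern (f s a) (h a) = ∑ s, p s * klBern (f s a) (g a) + klBern (g a) (h a)`,
and the last term is nonnegative. Independence of `S` and `A` is what lets the weights `p s` be the
same for every `a`.
-/

open Real InformationTheory

lemma klBern_eq_mul_klFun_add_mul_klFun (x : ℝ) {y : ℝ} (hy0 : y ≠ 0) (hy1 : y ≠ 1) :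
    klBern x y = y * klFun (x / y) + (1 - y) * klFun ((1 - x) / (1 - y)) := by
  have hy1' : 1 - y ≠ 0 := sub_ne_zero.2 hy1.symm
  simp only [klBern, klFun_apply]
  field_simp
  ring

lemma klBern_nonneg {x y : ℝ} (hx0 : 0 ≤ x) (hx1 : x ≤ 1) (hy0 : 0 < y) (hy1 : y < 1) :
    0 ≤ klBern x y := by
  rw [klBern_eq_mul_klFun_add_mul_klFun x hy0.ne' hy1.ne]
  have hy1' : 0 < 1 - y := sub_pos.2 hy1
  exact add_nonneg (mul_nonneg hy0.le (klFun_nonneg (div_nonneg hx0 hy0.le)))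
    (mul_nonneg hy1'.le (klFun_nonneg (div_nonneg (sub_nonneg.2 hx1) hy1'.le)))

lemma klBern_self (x : ℝ) : klBern x x = 0 := by
  simp [klBern]

lemma mul_log_div_sub_mul_log_div (x : ℝ) {y z : ℝ} (hy : y ≠ 0) (hz : z ≠ 0) :
    x * log (x / y) - x * log (x / z) = x * (log z - log y) := by
  rcases eq_or_ne x 0 with rfl | hx
  · simp
  · rw [log_div hx hy, log_div hx hz]
    ring

lemma klBern_sub_klBern (x : ℝ) {y z : ℝ} (hy0 : y ≠ 0) (hy1 : y ≠ 1) (hz0 : z ≠ 0)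
    (hz1 : z ≠ 1) :
    klBern x y - klBern x z =
      x * (log z - log y) + (1 - x) * (log (1 - z) - log (1 - y)) := by
  have h := mul_log_div_sub_mul_log_div x hy0 hz0
  have h' := mul_log_div_sub_mul_log_div (1 - x) (sub_ne_zero.2 hy1.symm) (sub_ne_zero.2 hz1.symm)
  simp only [klBern]
  linarith

theorem sum_mul_klBern_eq_add {ι : Type*} (s : Finset ι) {w x : ι → ℝ}
    (hw : ∑ i ∈ s, w i = 1) (hx0 : ∑ i ∈ s, w i * x i ≠ 0) (hx1 : ∑ i ∈ s, w i * x i ≠ 1)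
    {y : ℝ} (hy0 : y ≠ 0) (hy1 : y ≠ 1) :
    ∑ i ∈ s, w i * klBern (x i) y =
      ∑ i ∈ s, w i * klBern (x i) (∑ j ∈ s, w j * x j) + klBern (∑ j ∈ s, w j * x j) y := by
  set xbar := ∑ j ∈ s, w j * x j
  have haffine := fun u ↦ klBern_sub_klBern u hy0 hy1 hx0 hx1
  rw [← sub_eq_iff_eq_add', ← sum_sub_distrib]
  calc ∑ i ∈ s, (w i * klBern (x i) y - w i * klBern (x i) xbar)
      = ∑ i ∈ s, ((log xbar - log y) * (w i * x i) +
          (log (1 - xbar) - log (1 - y)) * (w i - w i * x i)) :=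
        sum_congr rfl fun i _ ↦ by rw [← mul_sub, haffine]; ring
    _ = (log xbar - log y) * xbar + (log (1 - xbar) - log (1 - y)) * (1 - xbar) := by
        rw [sum_add_distrib, ← mul_sum, ← mul_sum, sum_sub_distrib, hw]
    _ = klBern xbar y - klBern xbar xbar := by rw [haffine]; ring
    _ = klBern xbar y := by rw [klBern_self, sub_zero]

theorem sum_mul_klBern_mean_le {ι : Type*} (s : Finset ι) {w x : ι → ℝ}
    (hw0 : ∀ i ∈ s, 0 ≤ w i) (hw : ∑ i ∈ s, w i = 1) (hx : ∀ i ∈ s, x i ∈ Set.Ioo 0 1)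
    {y : ℝ} (hy : y ∈ Set.Ioo 0 1) :
    ∑ i ∈ s, w i * klBern (x i) (∑ j ∈ s, w j * x j) ≤ ∑ i ∈ s, w i * klBern (x i) y := by
  have hmean : ∑ j ∈ s, w j * x j ∈ Set.Ioo 0 1 := (convex_Ioo 0 1).sum_mem hw0 hw hx
  rw [sum_mul_klBern_eq_add s hw hmean.1.ne' hmean.2.ne hy.1.ne' hy.2.ne]
  exact le_add_of_nonneg_right (klBern_nonneg hmean.1.le hmean.2.le hy.1 hy.2)

theorem eo_predictor_optimal_among_eo_fair_rules_general
    {S A : Type} [Fintype S] [Fintype A]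
    (p : S → ℝ) (hp : ∀ s, 0 ≤ p s) (hpsum : ∑ s, p s = 1)
    (m : A → ℝ) (hm : ∀ a, 0 < m a)
    -- the joint pmf factorizes: q(s,a) = p(s) m(a), i.e. S ⊥ A
    (q : S → A → ℝ) (hq : ∀ s a, q s a = p s * m a)
    (f : S → A → ℝ) (hf0 : ∀ s a, 0 < f s a) (hf1 : ∀ s a, f s a < 1)
    (h : A → ℝ) (hh0 : ∀ a, 0 < h a) (hh1 : ∀ a, h a < 1) :
    ∑ s, ∑ a, q s a * klBern (f s a) (∑ s', f s' a * p s') ≤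
      ∑ s, ∑ a, q s a * klBern (f s a) (h a) := by
  have hcomm : ∀ a, ∑ s', f s' a * p s' = ∑ s', p s' * f s' a :=
    fun a ↦ sum_congr rfl fun s _ ↦ mul_comm _ _
  simp only [hq, hcomm, mul_comm (p _) (m _), mul_assoc (m _)]
  rw [sum_comm, sum_comm (f := fun s a ↦ m a * (p s * klBern (f s a) (h a)))]
  simp only [← mul_sum]
  refine sum_le_sum fun a _ ↦ mul_le_mul_of_nonneg_left ?_ (hm a).le
  exact sum_mul_klBern_mean_le univ (fun s _ ↦ hp s) hpsum
    (fun s _ ↦ ⟨hf0 s a, hf1 s a⟩) ⟨hh0 a, hh1 a⟩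

theorem eo_predictor_optimal_among_eo_fair_rules
    {S A : Type} [Fintype S] [Fintype A]
    (p : S → ℝ) (hp : ∀ s, 0 ≤ p s) (hpsum : ∑ s, p s = 1)
    (m : A → ℝ) (hm : ∀ a, 0 < m a) (hmsum : ∑ a, m a = 1)
    -- the joint pmf factorizes: q(s,a) = p(s) m(a), i.e. S ⊥ A
    (q : S → A → ℝ) (hq : ∀ s a, q s a = p s * m a)
    (f : S → A → ℝ) (hf0 : ∀ s a, 0 < f s a) (hf1 : ∀ s a, f s a < 1)
    (h : A → ℝ) (hh0 : ∀ a, 0 < h a) (hh1 : ∀ a, h a < 1) :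
    ∑ s, ∑ a, q s a * klBern (f s a) (∑ s', f s' a * p s') ≤
      ∑ s, ∑ a, q s a * klBern (f s a) (h a) :=
  eo_predictor_optimal_among_eo_fair_rules_general p hp hpsum m hm q hq f hf0 hf1 h hh0 hh1
end

section
/- In the linear-abduction setting with S finite (pmf p), residual ε distributed according to a pmf ν on a finite set E ⊆ ℝ, A = g(S) + ε with S ⊥ ε, and f_eo : ℝ → [0,1]: the distribution of the AA decision probability f_aa(S, A) = Σ_{s'} p(s') f_eo(g(s') + ε) depends only on ε and not on S. Consequently f_aa(S,A) is independent of S, i.e., the AA predictor satisfies demographic parity. -/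
open Finset

/-- The AA predictor in the linear-abduction setting. -/
noncomputable def aaPredictor {S : Type} [Fintype S]
    (p : S → ℝ) (g : S → ℝ) (feo : ℝ → ℝ) (s : S) (a : ℝ) : ℝ :=
  ∑ s', p s' * feo (g s' + (a - g s))

theorem aaPredictor_self_add {S : Type} [Fintype S] (p g : S → ℝ) (feo : ℝ → ℝ) (s : S) (t : ℝ) :
    aaPredictor p g feo s (g s + t) = ∑ s', p s' * feo (g s' + t) := by
  simp only [aaPredictor, add_sub_cancel_left]

/-- Under the product law `p ⊗ ν`, an event about the second coordinate is independent of the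
first. -/
theorem sum_prod_ite_fst_eq_and_of_sum_eq_one {S E : Type} [Fintype S] [Fintype E]
    [DecidableEq S] (p : S → ℝ) (hpsum : ∑ s, p s = 1) (ν : E → ℝ) (R : E → Prop)
    [DecidablePred R] (s : S) :
    (∑ se : S × E, if se.1 = s ∧ R se.2 then p se.1 * ν se.2 else 0)
      = p s * ∑ se : S × E, if R se.2 then p se.1 * ν se.2 else 0 := by
  have hsnd : (∑ se : S × E, if R se.2 then p se.1 * ν se.2 else 0)
      = ∑ e, if R e then ν e else 0 := by
    simp_rw [Fintype.sum_prod_type, ← mul_ite_zero, ← mul_sum, ← sum_mul, hpsum, one_mul]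
  rw [hsnd, Fintype.sum_prod_type, Fintype.sum_eq_single s fun s' hs' => by simp [hs'], mul_sum]
  simp_rw [true_and, ← mul_ite_zero]

theorem aa_predictor_demographic_parity_general
    {S E : Type} [Fintype S] [Fintype E] [DecidableEq S]
    (p : S → ℝ) (hpsum : ∑ s, p s = 1)
    (ν : E → ℝ)
    (g : S → ℝ) (ε : E → ℝ) (feo : ℝ → ℝ) :
    -- the AA decision probability f_aa(S, A) with A = g(S) + ε is a function
    -- of ε alone, not of S:
    (∃ φ : ℝ → ℝ, ∀ (s : S) (e : E),
      aaPredictor p g feo s (g s + ε e) = φ (ε e)) ∧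
    -- consequently f_aa(S, A) is independent of S under the product law p ⊗ ν:
    (∀ (Q : ℝ → Prop) [DecidablePred Q] (s : S),
      (∑ se : S × E,
        if se.1 = s ∧ Q (aaPredictor p g feo se.1 (g se.1 + ε se.2))
        then p se.1 * ν se.2 else 0)
      = p s *
        (∑ se : S × E,
          if Q (aaPredictor p g feo se.1 (g se.1 + ε se.2))
          then p se.1 * ν se.2 else 0)) := by
  refine ⟨⟨fun t => ∑ s', p s' * feo (g s' + t), fun s e => aaPredictor_self_add p g feo s (ε e)⟩, ?_⟩
  intro Q _ s
  simp_rw [aaPredictor_self_add]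
  exact sum_prod_ite_fst_eq_and_of_sum_eq_one p hpsum ν
    (fun e => Q (∑ s', p s' * feo (g s' + ε e))) s

theorem aa_predictor_demographic_parity
    {S E : Type} [Fintype S] [Fintype E] [DecidableEq S]
    (p : S → ℝ) (hp : ∀ s, 0 ≤ p s) (hpsum : ∑ s, p s = 1)
    (ν : E → ℝ) (hν : ∀ e, 0 ≤ ν e) (hνsum : ∑ e, ν e = 1)
    (g : S → ℝ) (ε : E → ℝ) (feo : ℝ → ℝ) (hfeo : ∀ x, 0 ≤ feo x ∧ feo x ≤ 1) :
    -- the AA decision probability f_aa(S, A) with A = g(S) + ε is a function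
    -- of ε alone, not of S:
    (∃ φ : ℝ → ℝ, ∀ (s : S) (e : E),
      aaPredictor p g feo s (g s + ε e) = φ (ε e)) ∧
    -- consequently f_aa(S, A) is independent of S under the product law p ⊗ ν:
    (∀ (Q : ℝ → Prop) [DecidablePred Q] (s : S),
      (∑ se : S × E,
        if se.1 = s ∧ Q (aaPredictor p g feo se.1 (g se.1 + ε se.2))
        then p se.1 * ν se.2 else 0)
      = p s *
        (∑ se : S × E,
          if Q (aaPredictor p g feo se.1 (g se.1 + ε se.2))
          then p se.1 * ν se.2 else 0)) :=
  aa_predictor_demographic_parity_general p hpsum ν g ε feo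
end
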